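/- In the extended Black–Scholes model with an earnings announcement, the call price C(t,S) = C_BS(T−t, S; I(t), K, r) with I(t) = √(σ² + σ_e²/(T−t)) satisfies, for 0 ≤ t < T and all S > 0, the two-sided Theta bound: Θ_BS(T−t, S; I(t), K, r) ≤ ∂C/∂t (t, S) ≤ 0, where Θ_BS(τ, S; σ, K, r) = −S·σ·φ(d₁)/(2√τ) − r·K·e^{−rτ}·Φ(d₂). -/

import Mathlib

open MeasureTheory ProbabilityTheory

/-- The standard normal cumulative distribution function `Φ`. -/
noncomputable def stdNormalCDF (x : ℝ) : ℝ := ((gaussianReal 0 1) (Set.Iic x)).toReal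

/-- The standard normal density `φ`. -/
noncomputable def stdNormalPDF (x : ℝ) : ℝ := Real.exp (-x ^ 2 / 2) / Real.sqrt (2 * Real.pi)

/-- The Black–Scholes quantity `d₁`. -/
noncomputable def d1 (τ S σ K r : ℝ) : ℝ :=
  (Real.log (S / K) + (r + σ ^ 2 / 2) * τ) / (σ * Real.sqrt τ)

/-- The Black–Scholes quantity `d₂ = d₁ − σ√τ`. -/
noncomputable def d2 (τ S σ K r : ℝ) : ℝ := d1 τ S σ K r - σ * Real.sqrt τ

/-- The Black–Scholes call price `C_BS(τ, S; σ, K, r) = S·Φ(d₁) − K·e^{−rτ}·Φ(d₂)`. -/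
noncomputable def BSCall (τ S σ K r : ℝ) : ℝ :=
  S * stdNormalCDF (d1 τ S σ K r) - K * Real.exp (-r * τ) * stdNormalCDF (d2 τ S σ K r)

/-- The Black–Scholes Vega `V_BS(τ, S; σ, K, r) = S·φ(d₁)·√τ`. -/
noncomputable def BSVega (τ S σ K r : ℝ) : ℝ :=
  S * stdNormalPDF (d1 τ S σ K r) * Real.sqrt τ

/-- The Black–Scholes Theta
`Θ_BS(τ, S; σ, K, r) = −S·σ·φ(d₁)/(2√τ) − r·K·e^{−rτ}·Φ(d₂)`. -/
noncomputable def BSTheta (τ S σ K r : ℝ) : ℝ :=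
  -S * σ * stdNormalPDF (d1 τ S σ K r) / (2 * Real.sqrt τ)
    - r * K * Real.exp (-r * τ) * stdNormalCDF (d2 τ S σ K r)


/-!
Write the Black–Scholes price in terms of the total volatility `v = σ√τ`; then
`∂C/∂v = S φ(d₁)` and `∂C/∂τ = r K e^{-rτ} Φ(d₂)`. In the model `v(s) = √(σ²(T - s) + σₑ²)`
decays at rate `σ²/(2v)`, so `∂C/∂t = -S φ(d₁) σ²/(2v) - r K e^{-rτ} Φ(d₂)`, a sum of two
nonpositive terms. `Θ_BS` is the same expression for `v = I√τ` at frozen volatility `I`, whose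
decay rate `I/(2√τ) = I²/(2v)` is at least `σ²/(2v)` because `I² = σ² + σₑ²/τ`.
-/

open Real

lemma stdNormalPDF_eq_gaussianPDFReal : stdNormalPDF = gaussianPDFReal 0 1 := by
  funext x
  rw [stdNormalPDF, gaussianPDFReal]
  push_cast
  rw [mul_one, sub_zero, inv_mul_eq_div, eq_div_iff (by positivity), div_mul_eq_mul_div,
    mul_comm]
  norm_num
  exact mul_div_cancel_left₀ _ (by positivity)

lemma stdNormalPDF_pos (x : ℝ) : 0 < stdNormalPDF x := by
  unfold stdNormalPDF; positivity

lemma stdNormalCDF_nonneg (x : ℝ) : 0 ≤ stdNormalCDF x := ENNReal.toReal_nonneg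

lemma stdNormalCDF_eq_integral (x : ℝ) : stdNormalCDF x = ∫ y in Set.Iic x, stdNormalPDF y := by
  rw [stdNormalCDF, gaussianReal_apply_eq_integral 0 one_ne_zero,
    stdNormalPDF_eq_gaussianPDFReal, ENNReal.toReal_ofReal]
  exact setIntegral_nonneg measurableSet_Iic fun y _ => gaussianPDFReal_nonneg 0 1 y

lemma hasDerivAt_stdNormalCDF (x : ℝ) : HasDerivAt stdNormalCDF (stdNormalPDF x) x := by
  have hint : Integrable stdNormalPDF := by
    rw [stdNormalPDF_eq_gaussianPDFReal]; exact integrable_gaussianPDFReal 0 1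
  have hcdf : ∀ y, stdNormalCDF y = stdNormalCDF 0 + ∫ z in (0 : ℝ)..y, stdNormalPDF z := by
    intro y
    rw [← intervalIntegral.integral_Iic_sub_Iic hint.integrableOn hint.integrableOn,
      ← stdNormalCDF_eq_integral, ← stdNormalCDF_eq_integral]
    ring
  have hcont : Continuous stdNormalPDF := by unfold stdNormalPDF; fun_prop
  exact ((hcont.integral_hasStrictDerivAt 0 x).hasDerivAt.const_add _).congr_of_eventuallyEq
    (Filter.Eventually.of_forall hcdf)

/-- The two exponents differ by exactly `a`. -/
lemma stdNormalPDF_div_sub_half {v : ℝ} (hv : v ≠ 0) (a : ℝ) :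
    stdNormalPDF (a / v - v / 2) = exp a * stdNormalPDF (a / v + v / 2) := by
  rw [stdNormalPDF, stdNormalPDF, mul_div_assoc', ← exp_add]
  congr 2
  field_simp
  ring

noncomputable def d1TotalVol (τ S v K r : ℝ) : ℝ := (log (S / K) + r * τ) / v + v / 2

noncomputable def d2TotalVol (τ S v K r : ℝ) : ℝ := (log (S / K) + r * τ) / v - v / 2

noncomputable def BSCallTotalVol (τ S v K r : ℝ) : ℝ :=
  S * stdNormalCDF (d1TotalVol τ S v K r) - K * exp (-r * τ) * stdNormalCDF (d2TotalVol τ S v K r)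

lemma d1_eq_d1TotalVol (τ S σ K r : ℝ) : d1 τ S σ K r = d1TotalVol τ S (σ * √τ) K r := by
  rw [d1, d1TotalVol]
  rcases eq_or_ne (σ * √τ) 0 with h | h
  · simp [h]
  have hτ : 0 ≤ τ := by
    by_contra! hτ
    exact h (by rw [sqrt_eq_zero_of_nonpos hτ.le, mul_zero])
  field_simp
  rw [sq_sqrt hτ]
  ring

lemma d2_eq_d2TotalVol (τ S σ K r : ℝ) : d2 τ S σ K r = d2TotalVol τ S (σ * √τ) K r := by
  rw [d2, d1_eq_d1TotalVol, d1TotalVol, d2TotalVol]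
  ring

lemma BSCall_eq_BSCallTotalVol (τ S σ K r : ℝ) :
    BSCall τ S σ K r = BSCallTotalVol τ S (σ * √τ) K r := by
  rw [BSCall, BSCallTotalVol, d1_eq_d1TotalVol, d2_eq_d2TotalVol]

lemma BSTheta_eq (τ S σ K r : ℝ) :
    BSTheta τ S σ K r = S * stdNormalPDF (d1TotalVol τ S (σ * √τ) K r) * (-σ / (2 * √τ))
      - r * K * exp (-r * τ) * stdNormalCDF (d2TotalVol τ S (σ * √τ) K r) := by
  rw [BSTheta, d1_eq_d1TotalVol, d2_eq_d2TotalVol]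
  ring

lemma mul_stdNormalPDF_d2TotalVol {S K v : ℝ} (hS : 0 < S) (hK : 0 < K) (hv : v ≠ 0) (τ r : ℝ) :
    K * exp (-r * τ) * stdNormalPDF (d2TotalVol τ S v K r)
      = S * stdNormalPDF (d1TotalVol τ S v K r) := by
  rw [d2TotalVol, stdNormalPDF_div_sub_half hv, exp_add, exp_log (by positivity), ← d1TotalVol]
  field_simp
  rw [← exp_add]
  simp

lemma hasDerivAt_BSCallTotalVol {S K : ℝ} (hS : 0 < S) (hK : 0 < K) (r : ℝ) {τ v : ℝ → ℝ}
    {τ' v' t : ℝ} (hτ : HasDerivAt τ τ' t) (hv : HasDerivAt v v' t) (hv0 : v t ≠ 0) :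
    HasDerivAt (fun s => BSCallTotalVol (τ s) S (v s) K r)
      (S * stdNormalPDF (d1TotalVol (τ t) S (v t) K r) * v'
        + r * K * exp (-r * τ t) * stdNormalCDF (d2TotalVol (τ t) S (v t) K r) * τ') t := by
  have hmoney : HasDerivAt (fun s => log (S / K) + r * τ s) (r * τ') t :=
    (hτ.const_mul r).const_add _
  have hratio := hmoney.div hv hv0
  have hd1 : HasDerivAt (fun s => d1TotalVol (τ s) S (v s) K r) _ t := hratio.add (hv.div_const 2)
  have hd2 : HasDerivAt (fun s => d2TotalVol (τ s) S (v s) K r) _ t := hratio.sub (hv.div_const 2)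
  have hdisc : HasDerivAt (fun s => exp (-r * τ s)) _ t := (hτ.const_mul (-r)).exp
  have hC : HasDerivAt (fun s => BSCallTotalVol (τ s) S (v s) K r) _ t :=
    (((hasDerivAt_stdNormalCDF _).comp t hd1).const_mul S).sub
      ((hdisc.const_mul K).mul ((hasDerivAt_stdNormalCDF _).comp t hd2))
  refine hC.congr_deriv ?_
  -- `K e^{-rτ} φ(d₂) = S φ(d₁)` cancels the `φ` terms coming from `d₁'` and `d₂'`, except `v'`
  linear_combination (v' / 2 - (r * τ' * v t - (log (S / K) + r * τ t) * v') / v t ^ 2)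
    * mul_stdNormalPDF_d2TotalVol hS hK hv0 (τ t) r

lemma sqrt_add_div_mul_sqrt {τ : ℝ} (hτ : 0 < τ) (a b : ℝ) : √(a + b / τ) * √τ = √(a * τ + b) := by
  rw [← sqrt_mul' _ hτ.le]
  congr 1
  field_simp

lemma sq_div_le_sqrt_add_div {σ σe τ : ℝ} (hσe : σe ≠ 0) (hτ : 0 < τ) :
    σ ^ 2 / (2 * √(σ ^ 2 * τ + σe ^ 2)) ≤ √(σ ^ 2 + σe ^ 2 / τ) / (2 * √τ) := by
  rw [← sqrt_add_div_mul_sqrt hτ]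
  have hI : 0 < σ ^ 2 + σe ^ 2 / τ := by positivity
  have hsqrtI := sqrt_pos.2 hI
  rw [div_le_div_iff₀ (by positivity) (by positivity)]
  calc σ ^ 2 * (2 * √τ) ≤ √(σ ^ 2 + σe ^ 2 / τ) ^ 2 * (2 * √τ) := by
        gcongr ?_ * _
        rw [sq_sqrt hI.le]
        exact le_add_of_nonneg_right (by positivity)
    _ = √(σ ^ 2 + σe ^ 2 / τ) * (2 * (√(σ ^ 2 + σe ^ 2 / τ) * √τ)) := by ring

lemma hasDerivAt_extendedBSCall {σ σe T K r S t : ℝ} (hσe : σe ≠ 0) (htT : t < T) (hS : 0 < S)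
    (hK : 0 < K) :
    HasDerivAt (fun s => BSCall (T - s) S (√(σ ^ 2 + σe ^ 2 / (T - s))) K r)
      (S * stdNormalPDF (d1TotalVol (T - t) S (√(σ ^ 2 * (T - t) + σe ^ 2)) K r)
          * (-σ ^ 2 / (2 * √(σ ^ 2 * (T - t) + σe ^ 2)))
        - r * K * exp (-r * (T - t))
          * stdNormalCDF (d2TotalVol (T - t) S (√(σ ^ 2 * (T - t) + σe ^ 2)) K r)) t := by
  have hτ : HasDerivAt (fun s => T - s) (-1) t := by simpa using (hasDerivAt_id t).const_sub T
  have hvar : 0 < σ ^ 2 * (T - t) + σe ^ 2 := by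
    have := sub_pos.2 htT
    positivity
  have hv : HasDerivAt (fun s => √(σ ^ 2 * (T - s) + σe ^ 2))
      (-σ ^ 2 / (2 * √(σ ^ 2 * (T - t) + σe ^ 2))) t := by
    convert ((hτ.const_mul (σ ^ 2)).add_const (σe ^ 2)).sqrt hvar.ne' using 1
    ring
  refine ((hasDerivAt_BSCallTotalVol hS hK r hτ hv (sqrt_pos.2 hvar).ne').congr_of_eventuallyEq
    ?_).congr_deriv (by ring)
  filter_upwards [eventually_lt_nhds htT] with s hs
  rw [BSCall_eq_BSCallTotalVol, sqrt_add_div_mul_sqrt (sub_pos.2 hs)]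

theorem extendedBS_theta_bounds
    (r σ σe t T K : ℝ) (hr : 0 ≤ r) (hσe : 0 < σe)
    (hK : 0 < K) (htT : t < T) :
    ∀ S : ℝ, 0 < S →
      BSTheta (T - t) S (Real.sqrt (σ ^ 2 + σe ^ 2 / (T - t))) K r
          ≤ deriv (fun s : ℝ => BSCall (T - s) S (Real.sqrt (σ ^ 2 + σe ^ 2 / (T - s))) K r) t
        ∧ deriv (fun s : ℝ => BSCall (T - s) S (Real.sqrt (σ ^ 2 + σe ^ 2 / (T - s))) K r) t
          ≤ 0 := by
  intro S hS
  have hτ := sub_pos.2 htT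
  rw [(hasDerivAt_extendedBSCall hσe.ne' htT hS hK).deriv, BSTheta_eq,
    sqrt_add_div_mul_sqrt hτ]
  set v := √(σ ^ 2 * (T - t) + σe ^ 2)
  have hvega := stdNormalPDF_pos (d1TotalVol (T - t) S v K r)
  have hrho := stdNormalCDF_nonneg (d2TotalVol (T - t) S v K r)
  constructor
  · gcongr ?_ - _
    rw [neg_div, neg_div, mul_neg, mul_neg, neg_le_neg_iff]
    exact mul_le_mul_of_nonneg_left (sq_div_le_sqrt_add_div hσe.ne' hτ) (by positivity)
  · have hdecay : 0 ≤ S * stdNormalPDF (d1TotalVol (T - t) S v K r) * (σ ^ 2 / (2 * v)) := by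
      positivity
    have hcarry : 0 ≤ r * K * exp (-r * (T - t)) * stdNormalCDF (d2TotalVol (T - t) S v K r) := by
      positivity
    rw [neg_div, mul_neg]
    linarith
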